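/- arXiv:0806.1652 — 2 statements merged into one kernel-verified Lean document; each statement's English description precedes it below -/
import Mathlib

section
/- For every n ≥ 1, every tuning parameter η_n > 0, all nonnegative real numbers a_n, b_n, and every θ ∈ ℝ, the coverage probability p_{S,n}(θ) = P_{n,θ}(θ ∈ [θ̂_S − a_n, θ̂_S + b_n]) equals Φ(n^{1/2}(a_n − η_n)) − Φ(n^{1/2}(−b_n − η_n)) if θ < −a_n; equals Φ(n^{1/2}(a_n + η_n)) − Φ(n^{1/2}(−b_n − η_n)) if −a_n ≤ θ ≤ b_n; and equals Φ(n^{1/2}(a_n + η_n)) − Φ(n^{1/2}(−b_n + η_n)) if θ > b_n. -/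
open MeasureTheory ProbabilityTheory Filter
open scoped NNReal

/-- Standard normal cumulative distribution function Φ. -/
noncomputable def stdNormCDF (x : ℝ) : ℝ :=
  ((gaussianReal 0 1) (Set.Iic x)).toReal

/-- Soft-thresholding (LASSO) estimator with threshold η, as a function of ȳ. -/
noncomputable def softThresh (η y : ℝ) : ℝ := Real.sign y * max (|y| - η) 0

/-- Hard-thresholding estimator with threshold η, as a function of ȳ. -/
noncomputable def hardThresh (η y : ℝ) : ℝ := if η < |y| then y else 0

/-- Adaptive LASSO estimator with tuning parameter η, as a function of ȳ. -/
noncomputable def adaLasso (η y : ℝ) : ℝ := if |y| ≤ η then 0 else y - η ^ 2 / y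

/-- Coverage probability `P_{n,θ}(θ ∈ [est(ȳ) - a, est(ȳ) + b])` in the
known-variance case (σ = 1), where ȳ ~ N(θ, 1/n). -/
noncomputable def cover (n : ℕ) (est : ℝ → ℝ) (a b θ : ℝ) : ℝ :=
  ((gaussianReal θ ((n : ℝ≥0))⁻¹)
    {y : ℝ | est y - a ≤ θ ∧ θ ≤ est y + b}).toReal

/-! Soft thresholding is monotone, so the coverage event `θ - b ≤ θ̂_S ≤ θ + a` is an interval
of `ȳ`: an endpoint `c` of `[θ - b, θ + a]` pulls back to `c + η` or `c - η` according to the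
sign of `c`, and the three regimes of `θ` are the three sign patterns of `(θ - b, θ + a)`.
Standardizing `ȳ ~ N(θ, 1/n)` turns the probability of that interval into a difference of
values of `Φ`. -/

open Set

section Gaussian

lemma gaussianReal_real_Icc_zero_one {l u : ℝ} (h : l ≤ u) :
    (gaussianReal 0 1).real (Icc l u) = stdNormCDF u - stdNormCDF l := by
  have := nullSingletonClass_gaussianReal (μ := 0) one_ne_zero
  rw [← Iic_sdiff_Iio, measureReal_sdiff (Iio_subset_Iic_self.trans (Iic_subset_Iic.2 h))
    measurableSet_Iio, measureReal_congr Iio_ae_eq_Iic]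
  rfl

lemma gaussianReal_eq_map_zero_one (μ : ℝ) (v : ℝ≥0) :
    gaussianReal μ v = ((gaussianReal 0 1).map (√(v : ℝ) * ·)).map (· + μ) := by
  rw [gaussianReal_map_const_mul, gaussianReal_map_add_const]
  congr 1
  · simp
  · ext
    simp

lemma gaussianReal_real_Icc (μ : ℝ) {v : ℝ≥0} (hv : v ≠ 0) {l u : ℝ} (h : l ≤ u) :
    (gaussianReal μ v).real (Icc l u) =
      stdNormCDF ((u - μ) / √(v : ℝ)) - stdNormCDF ((l - μ) / √(v : ℝ)) := by
  have hσ : 0 < √(v : ℝ) := Real.sqrt_pos.2 (NNReal.coe_pos.2 (pos_iff_ne_zero.2 hv))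
  rw [gaussianReal_eq_map_zero_one, map_measureReal_apply (measurable_add_const μ)
    measurableSet_Icc, preimage_add_const_Icc, map_measureReal_apply (measurable_const_mul _)
    measurableSet_Icc, preimage_const_mul_Icc₀ _ _ hσ]
  exact gaussianReal_real_Icc_zero_one (by gcongr)

end Gaussian

section SoftThresh

variable {η c y : ℝ}

lemma softThresh_neg (η y : ℝ) : softThresh η (-y) = -softThresh η y := by
  simp [softThresh, Real.sign_neg]

lemma softThresh_of_abs_le (h : |y| ≤ η) : softThresh η y = 0 := by
  rw [softThresh, max_eq_right (by linarith), mul_zero]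

lemma softThresh_of_lt (hη : 0 ≤ η) (h : η < y) : softThresh η y = y - η := by
  have hy : 0 < y := by linarith
  rw [softThresh, Real.sign_of_pos hy, abs_of_pos hy, one_mul, max_eq_left (by linarith)]

lemma softThresh_of_lt_neg (hη : 0 ≤ η) (h : y < -η) : softThresh η y = y + η := by
  have hy : y < 0 := by linarith
  rw [softThresh, Real.sign_of_neg hy, abs_of_neg hy, max_eq_left (by linarith)]
  ring

lemma softThresh_le_iff_of_nonneg (hη : 0 ≤ η) (hc : 0 ≤ c) :
    softThresh η y ≤ c ↔ y ≤ c + η := by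
  rcases lt_or_ge η y with hy | hy
  · rw [softThresh_of_lt hη hy, sub_le_iff_le_add]
  rcases lt_or_ge y (-η) with hy' | hy'
  · rw [softThresh_of_lt_neg hη hy']
    constructor <;> intro <;> linarith
  · rw [softThresh_of_abs_le (abs_le.2 ⟨hy', hy⟩)]
    constructor <;> intro <;> linarith

lemma softThresh_le_iff_of_neg (hη : 0 ≤ η) (hc : c < 0) :
    softThresh η y ≤ c ↔ y ≤ c - η := by
  rcases lt_or_ge y (-η) with hy | hy
  · rw [softThresh_of_lt_neg hη hy, ← le_sub_iff_add_le]
  rcases lt_or_ge η y with hy' | hy'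
  · rw [softThresh_of_lt hη hy']
    constructor <;> intro <;> linarith
  · rw [softThresh_of_abs_le (abs_le.2 ⟨hy, hy'⟩)]
    constructor <;> intro <;> linarith

lemma le_softThresh_iff_of_nonpos (hη : 0 ≤ η) (hc : c ≤ 0) :
    c ≤ softThresh η y ↔ c - η ≤ y := by
  rw [← neg_le_neg_iff, ← softThresh_neg, softThresh_le_iff_of_nonneg hη (neg_nonneg.2 hc)]
  constructor <;> intro <;> linarith

lemma le_softThresh_iff_of_pos (hη : 0 ≤ η) (hc : 0 < c) :
    c ≤ softThresh η y ↔ c + η ≤ y := by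
  rw [← neg_le_neg_iff, ← softThresh_neg, softThresh_le_iff_of_neg hη (neg_neg_iff_pos.2 hc)]
  constructor <;> intro <;> linarith

end SoftThresh

lemma cover_eq_of_forall_iff {n : ℕ} (hn : 0 < n) {est : ℝ → ℝ} {a b θ l u : ℝ}
    (hlu : l ≤ u) (hest : ∀ y, θ - b ≤ est y ∧ est y ≤ θ + a ↔ l ≤ y ∧ y ≤ u) :
    cover n est a b θ =
      stdNormCDF (√n * (u - θ)) - stdNormCDF (√n * (l - θ)) := by
  have hset : {y : ℝ | est y - a ≤ θ ∧ θ ≤ est y + b} = Icc l u := by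
    ext y
    rw [mem_ofPred_eq, mem_Icc, ← hest]
    constructor <;> rintro ⟨h₁, h₂⟩ <;> constructor <;> linarith
  rw [cover, hset, ← measureReal_def, gaussianReal_real_Icc θ (by positivity) hlu]
  simp [Real.sqrt_inv, mul_comm]

/-- The finite-sample coverage probability of `[θ̂_S - a, θ̂_S + b]`, given piecewise
in `θ` (equation (cov_S)). -/
theorem stmt_1 (n : ℕ) (hn : 1 ≤ n) (η a b : ℝ) (hη : 0 < η) (ha : 0 ≤ a) (hb : 0 ≤ b)
    (θ : ℝ) :
    (θ < -a →
      cover n (softThresh η) a b θ =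
        stdNormCDF (Real.sqrt n * (a - η)) - stdNormCDF (Real.sqrt n * (-b - η))) ∧
    (-a ≤ θ → θ ≤ b →
      cover n (softThresh η) a b θ =
        stdNormCDF (Real.sqrt n * (a + η)) - stdNormCDF (Real.sqrt n * (-b - η))) ∧
    (b < θ →
      cover n (softThresh η) a b θ =
        stdNormCDF (Real.sqrt n * (a + η)) - stdNormCDF (Real.sqrt n * (-b + η))) := by
  refine ⟨fun h => ?_, fun h₁ h₂ => ?_, fun h => ?_⟩
  · rw [cover_eq_of_forall_iff hn (l := θ - b - η) (u := θ + a - η) (by linarith) fun y => by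
      rw [le_softThresh_iff_of_nonpos hη.le (by linarith),
        softThresh_le_iff_of_neg hη.le (by linarith)]]
    congr 3 <;> ring
  · rw [cover_eq_of_forall_iff hn (l := θ - b - η) (u := θ + a + η) (by linarith) fun y => by
      rw [le_softThresh_iff_of_nonpos hη.le (by linarith),
        softThresh_le_iff_of_nonneg hη.le (by linarith)]]
    congr 3 <;> ring
  · rw [cover_eq_of_forall_iff hn (l := θ - b + η) (u := θ + a + η) (by linarith) fun y => by
      rw [le_softThresh_iff_of_pos hη.le (by linarith),
        softThresh_le_iff_of_nonneg hη.le (by linarith)]]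
    congr 3 <;> ring
end

section
/- For every n ≥ 1, every tuning parameter η_n > 0 and all nonnegative real numbers a_n and b_n, the infimal coverage probability of the interval C_{H,n} = [θ̂_H − a_n, θ̂_H + b_n] is given by inf_{θ∈ℝ} P_{n,θ}(θ ∈ C_{H,n}) = Φ(n^{1/2}(a_n − η_n)) − Φ(−n^{1/2} b_n) if η_n ≤ a_n + b_n and a_n ≤ b_n; = Φ(n^{1/2}(b_n − η_n)) − Φ(−n^{1/2} a_n) if η_n ≤ a_n + b_n and a_n > b_n; and = 0 if η_n > a_n + b_n. -/
open MeasureTheory ProbabilityTheory Filter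
open scoped NNReal

/-!
Rescaling by `√n` reduces everything to `n = 1`, and since hard thresholding is odd, the
reflection `ȳ ↦ -ȳ` swaps `a` and `b`; so let `n = 1` and `a ≤ b`. Just to the left of
`θ = -a` only the branch `ȳ < -η` of `θ̂_H` can cover `θ`, and the coverage tends to
`Φ(a - η) - Φ(-b)` as `θ ↑ -a`. Conversely, for each `θ` an explicit interval of `ȳ`-values
on which `θ` is covered has at least this probability; for `θ > b` this rests on the fact
that the standard normal mass of a window of width `η` decreases as the window moves away
from `η / 2`. If `a + b < η`, no value of `θ̂_H` lies in `[θ - b, θ + a]` at `θ = η - a`.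
-/

open Set Topology

lemma stdNormCDF_eq_cdf : stdNormCDF = cdf (gaussianReal 0 1) :=
  funext fun x => (cdf_eq_real _ x).symm

lemma stdNormCDF_mono : Monotone stdNormCDF :=
  stdNormCDF_eq_cdf ▸ (cdf (gaussianReal 0 1)).mono

lemma stdNormCDF_continuousWithinAt_Ioi (x : ℝ) : ContinuousWithinAt stdNormCDF (Ioi x) x :=
  stdNormCDF_eq_cdf ▸ ((cdf (gaussianReal 0 1)).right_continuous x).mono Ioi_subset_Ici_self

lemma gaussianReal_one_real_Ioc (μ : ℝ) {p q : ℝ} (hpq : p ≤ q) :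
    (gaussianReal μ 1).real (Ioc p q) = stdNormCDF (q - μ) - stdNormCDF (p - μ) := by
  rw [← zero_add μ, ← gaussianReal_map_add_const, measureReal_def,
    Measure.map_apply (measurable_add_const μ) measurableSet_Ioc, preimage_add_const_Ioc,
    ← measure_cdf (gaussianReal 0 1), StieltjesFunction.measure_Ioc, zero_add,
    ENNReal.toReal_ofReal, stdNormCDF_eq_cdf]
  exact sub_nonneg.2 ((cdf _).mono (by linarith))

lemma gaussianReal_one_real_Ioo (μ : ℝ) {p q : ℝ} (hpq : p ≤ q) :
    (gaussianReal μ 1).real (Ioo p q) = stdNormCDF (q - μ) - stdNormCDF (p - μ) := by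
  have := nullSingletonClass_gaussianReal (μ := μ) one_ne_zero
  rw [measureReal_congr Ioo_ae_eq_Ioc, gaussianReal_one_real_Ioc μ hpq]

lemma gaussianReal_one_real_Ico (μ : ℝ) {p q : ℝ} (hpq : p ≤ q) :
    (gaussianReal μ 1).real (Ico p q) = stdNormCDF (q - μ) - stdNormCDF (p - μ) := by
  have := nullSingletonClass_gaussianReal (μ := μ) one_ne_zero
  rw [measureReal_congr Ico_ae_eq_Ioc, gaussianReal_one_real_Ioc μ hpq]

lemma stdNormCDF_neg (x : ℝ) : stdNormCDF (-x) = 1 - stdNormCDF x := by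
  have := nullSingletonClass_gaussianReal (μ := 0) one_ne_zero
  have hIic : gaussianReal 0 1 (Iic (-x)) = gaussianReal 0 1 (Ioi x) := by
    conv_lhs => rw [← neg_zero, ← gaussianReal_map_neg]
    rw [Measure.map_apply measurable_neg measurableSet_Iic, neg_preimage, neg_Iic, neg_neg,
      (measure_congr Ioi_ae_eq_Ici).symm]
  rw [stdNormCDF, hIic, ← compl_Iic, prob_compl_eq_one_sub measurableSet_Iic,
    ENNReal.toReal_sub_of_le prob_le_one ENNReal.one_ne_top, ENNReal.toReal_one, stdNormCDF]

lemma gaussianReal_le_gaussianReal_of_abs_sub_le {μ μ' : ℝ} {v : ℝ≥0} (hv : v ≠ 0) {s : Set ℝ}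
    (h : ∀ x ∈ s, |x - μ'| ≤ |x - μ|) : gaussianReal μ v s ≤ gaussianReal μ' v s := by
  rw [gaussianReal_apply μ hv, gaussianReal_apply μ' hv]
  refine setLIntegral_mono (measurable_gaussianPDF μ' v) fun x hx => ?_
  refine ENNReal.ofReal_le_ofReal
    (mul_le_mul_of_nonneg_left (Real.exp_le_exp.2 ?_) (by positivity))
  exact div_le_div_of_nonneg_right (neg_le_neg (sq_le_sq.2 (h x hx))) (by positivity)

lemma stdNormCDF_add_sub_add_le {p q Δ : ℝ} (hpq : p ≤ q) (hΔ : 0 ≤ Δ) (hp : -Δ ≤ 2 * p) :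
    stdNormCDF (q + Δ) - stdNormCDF (p + Δ) ≤ stdNormCDF q - stdNormCDF p := by
  have hshift : gaussianReal (-Δ) 1 (Ioc p q) ≤ gaussianReal 0 1 (Ioc p q) :=
    gaussianReal_le_gaussianReal_of_abs_sub_le one_ne_zero fun x hx => by
      rw [sub_zero, sub_neg_eq_add]
      exact abs_le.2 ⟨by linarith [hx.1], by linarith⟩ |>.trans (le_abs_self _)
  have hreal := ENNReal.toReal_mono (measure_ne_top _ _) hshift
  rwa [← measureReal_def, ← measureReal_def, gaussianReal_one_real_Ioc _ hpq,
    gaussianReal_one_real_Ioc _ hpq, sub_neg_eq_add, sub_neg_eq_add, sub_zero, sub_zero] at hreal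

lemma stdNormCDF_window_le_of_le_two_mul {e x y : ℝ} (he : 0 ≤ e) (hx : e ≤ 2 * x)
    (hxy : x ≤ y) : stdNormCDF y - stdNormCDF (y - e) ≤ stdNormCDF x - stdNormCDF (x - e) := by
  have hshift := stdNormCDF_add_sub_add_le (p := x - e) (q := y - e) (by linarith) he (by linarith)
  rw [sub_add_cancel, sub_add_cancel] at hshift
  linarith

lemma stdNormCDF_window_le {e x y : ℝ} (he : 0 ≤ e) (hxy : x ≤ y) (hexy : e ≤ x + y) :
    stdNormCDF y - stdNormCDF (y - e) ≤ stdNormCDF x - stdNormCDF (x - e) := by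
  rcases le_total e (2 * x) with hx | hx
  · exact stdNormCDF_window_le_of_le_two_mul he hx hxy
  · -- the window mass is symmetric about `e / 2`
    have hreflect := stdNormCDF_window_le_of_le_two_mul (x := e - x) he (by linarith) (by linarith)
    rw [sub_sub_cancel_left, ← neg_sub x e, stdNormCDF_neg, stdNormCDF_neg] at hreflect
    linarith

lemma hardThresh_of_lt_abs {η y : ℝ} (h : η < |y|) : hardThresh η y = y := if_pos h

lemma hardThresh_neg (η y : ℝ) : hardThresh η (-y) = -hardThresh η y := by
  unfold hardThresh
  rw [abs_neg]
  split_ifs <;> simp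

lemma mul_hardThresh_div {s : ℝ} (hs : 0 < s) (η y : ℝ) :
    s * hardThresh η (y / s) = hardThresh (s * η) y := by
  simp only [hardThresh, abs_div, abs_of_pos hs, lt_div_iff₀ hs, mul_comm η s]
  split_ifs
  · field_simp
  · rw [mul_zero]

section cover

variable {n : ℕ} {est : ℝ → ℝ} {a b θ : ℝ}

lemma cover_nonneg : 0 ≤ cover n est a b θ := ENNReal.toReal_nonneg

lemma bddBelow_range_cover : BddBelow (range (cover n est a b)) :=
  ⟨0, forall_mem_range.2 fun _ => cover_nonneg⟩

lemma cover_one :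
    cover 1 est a b θ = (gaussianReal θ 1).real {y | est y - a ≤ θ ∧ θ ≤ est y + b} := by
  simp [cover, measureReal_def]

lemma stdNormCDF_sub_le_cover_one_of_Ioo_subset {p q : ℝ} (hpq : p ≤ q)
    (h : Ioo p q ⊆ {y | est y - a ≤ θ ∧ θ ≤ est y + b}) :
    stdNormCDF (q - θ) - stdNormCDF (p - θ) ≤ cover 1 est a b θ := by
  rw [← gaussianReal_one_real_Ioo θ hpq, cover_one]
  exact measureReal_mono h

lemma cover_neg_of_odd (hest : ∀ y, est (-y) = -est y) :
    cover n est a b (-θ) = cover n est b a θ := by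
  rw [cover, cover, ← gaussianReal_map_neg, measurableEmbedding_neg.map_apply]
  congr 2
  ext y
  simp only [mem_preimage, mem_ofPred_eq, hest]
  constructor <;> rintro ⟨h₁, h₂⟩ <;> constructor <;> linarith

lemma iInf_cover_swap_of_odd (hest : ∀ y, est (-y) = -est y) :
    ⨅ θ, cover n est a b θ = ⨅ θ, cover n est b a θ := by
  rw [← (Equiv.neg ℝ).iInf_comp]
  simp only [Equiv.neg_apply, cover_neg_of_odd hest]

lemma cover_eq_cover_one (hn : n ≠ 0) :
    cover n est a b θ =
      cover 1 (fun y => √n * est (y / √n)) (√n * a) (√n * b) (√n * θ) := by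
  have hs : 0 < √(n : ℝ) := Real.sqrt_pos.2 (by positivity)
  have hlaw : (gaussianReal θ (n : ℝ≥0)⁻¹).map (√n * ·) =
      gaussianReal (√n * θ) ((1 : ℕ) : ℝ≥0)⁻¹ := by
    rw [gaussianReal_map_const_mul]
    congr 1
    ext
    simp [Real.sq_sqrt (Nat.cast_nonneg n), hn]
  rw [cover, cover, ← hlaw, ← MeasurableEquiv.coe_mulLeft₀ hs.ne', MeasurableEquiv.map_apply]
  congr 2
  ext y
  simp only [MeasurableEquiv.coe_mulLeft₀, mem_preimage, mem_ofPred_eq,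
    mul_div_cancel_left₀ _ hs.ne']
  rw [← mul_sub, ← mul_add, mul_le_mul_iff_of_pos_left hs, mul_le_mul_iff_of_pos_left hs]

lemma iInf_cover_hardThresh_eq_iInf_cover_one (hn : n ≠ 0) (η : ℝ) :
    ⨅ θ, cover n (hardThresh η) a b θ =
      ⨅ θ, cover 1 (hardThresh (√n * η)) (√n * a) (√n * b) θ := by
  have hs : 0 < √(n : ℝ) := Real.sqrt_pos.2 (by positivity)
  simp_rw [cover_eq_cover_one hn, mul_hardThresh_div hs]
  exact (mul_left_surjective₀ hs.ne').iInf_comp _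

end cover

section hardThresh

variable {η a b : ℝ}

lemma cover_one_hardThresh_eq (hab : η ≤ a + b) {c : ℝ} (hc : c ∈ Ioc (a - η) a) :
    cover 1 (hardThresh η) a b (-η - c) = stdNormCDF c - stdNormCDF (-b) := by
  obtain ⟨hc₁, hc₂⟩ := hc
  have hset : {y | hardThresh η y - a ≤ -η - c ∧ -η - c ≤ hardThresh η y + b} =
      Ico (-η - c - b) (-η) := by
    ext y
    simp only [mem_ofPred_eq, mem_Ico, hardThresh]
    split_ifs with hy
    · constructor
      · rintro ⟨h₁, h₂⟩
        rw [abs_of_neg (by linarith)] at hy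
        exact ⟨by linarith, by linarith⟩
      · rintro ⟨h₁, h₂⟩
        exact ⟨by linarith, by linarith⟩
    · constructor
      · rintro ⟨h₁, -⟩
        linarith
      · rintro ⟨-, h₂⟩
        linarith [neg_abs_le y]
  rw [cover_one, hset, gaussianReal_one_real_Ico _ (by linarith),
    show -η - (-η - c) = c by ring, show -η - c - b - (-η - c) = -b by ring]

lemma stdNormCDF_sub_le_cover_one_hardThresh (hη : 0 ≤ η) (hab : η ≤ a + b) (hle : a ≤ b)
    (θ : ℝ) : stdNormCDF (a - η) - stdNormCDF (-b) ≤ cover 1 (hardThresh η) a b θ := by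
  rcases lt_or_ge θ (-a) with hθa | hθa
  · have hsub : Ioo (θ - b) (min (θ + a) (-η)) ⊆
        {y | hardThresh η y - a ≤ θ ∧ θ ≤ hardThresh η y + b} := by
      rintro y ⟨h₁, h₂⟩
      rw [lt_min_iff] at h₂
      rw [mem_ofPred_eq, hardThresh_of_lt_abs (by rw [abs_of_neg (by linarith)]; linarith)]
      exact ⟨by linarith, by linarith⟩
    refine le_trans ?_
      (stdNormCDF_sub_le_cover_one_of_Ioo_subset (le_min (by linarith) (by linarith)) hsub)
    rw [sub_sub_cancel_left]
    gcongr
    exact stdNormCDF_mono (le_sub_iff_add_le.2 (le_min (by linarith) (by linarith)))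
  rcases le_or_gt θ b with hθb | hθb
  · have hsub : Ioo (θ - b) (θ + a) ⊆ {y | hardThresh η y - a ≤ θ ∧ θ ≤ hardThresh η y + b} := by
      rintro y ⟨h₁, h₂⟩
      simp only [mem_ofPred_eq, hardThresh]
      split_ifs <;> constructor <;> linarith
    refine le_trans ?_ (stdNormCDF_sub_le_cover_one_of_Ioo_subset (by linarith) hsub)
    rw [add_sub_cancel_left, sub_sub_cancel_left]
    gcongr
    exact stdNormCDF_mono (by linarith)
  · have hsub : Ioo (max η (θ - b)) (θ + a) ⊆
        {y | hardThresh η y - a ≤ θ ∧ θ ≤ hardThresh η y + b} := by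
      rintro y ⟨h₁, h₂⟩
      rw [max_lt_iff] at h₁
      rw [mem_ofPred_eq, hardThresh_of_lt_abs (by rw [abs_of_pos (by linarith)]; linarith)]
      exact ⟨by linarith, by linarith⟩
    have hwindow := stdNormCDF_window_le hη hle hab
    rw [← neg_neg (b - η), stdNormCDF_neg, neg_sub, ← neg_neg b, stdNormCDF_neg (-b), neg_neg]
      at hwindow
    refine le_trans ?_
      (stdNormCDF_sub_le_cover_one_of_Ioo_subset (max_le (by linarith) (by linarith)) hsub)
    rw [add_sub_cancel_left]
    have hmax : stdNormCDF (max η (θ - b) - θ) ≤ stdNormCDF (η - b) :=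
      stdNormCDF_mono (sub_le_iff_le_add.2 (max_le (by linarith) (by linarith)))
    linarith

lemma iInf_cover_one_hardThresh (hη : 0 < η) (hab : η ≤ a + b) (hle : a ≤ b) :
    ⨅ θ, cover 1 (hardThresh η) a b θ = stdNormCDF (a - η) - stdNormCDF (-b) := by
  refine le_antisymm ?_ (le_ciInf (stdNormCDF_sub_le_cover_one_hardThresh hη.le hab hle))
  have hlim : Tendsto (fun c => stdNormCDF c - stdNormCDF (-b)) (𝓝[>] (a - η))
      (𝓝 (stdNormCDF (a - η) - stdNormCDF (-b))) :=
    (stdNormCDF_continuousWithinAt_Ioi _).tendsto.sub_const _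
  refine ge_of_tendsto hlim ?_
  filter_upwards [Ioc_mem_nhdsGT (show a - η < a by linarith)] with c hc
  exact (ciInf_le bddBelow_range_cover (-η - c)).trans (cover_one_hardThresh_eq hab hc).le

lemma iInf_cover_hardThresh_of_lt {n : ℕ} (h : a + b < η) :
    ⨅ θ, cover n (hardThresh η) a b θ = 0 := by
  refine le_antisymm ?_ (le_ciInf fun _ => cover_nonneg)
  have hempty : {y | hardThresh η y - a ≤ η - a ∧ η - a ≤ hardThresh η y + b} = ∅ := by
    ext y
    simp only [mem_ofPred_eq, mem_empty_iff_false, iff_false, hardThresh]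
    split_ifs with hy <;> rintro ⟨h₁, h₂⟩
    · rw [abs_of_pos (by linarith)] at hy
      linarith
    · linarith
  calc ⨅ θ, cover n (hardThresh η) a b θ ≤ cover n (hardThresh η) a b (η - a) :=
        ciInf_le bddBelow_range_cover _
    _ = 0 := by rw [cover, hempty, measure_empty, ENNReal.toReal_zero]

end hardThresh

theorem stmt_2_general (n : ℕ) (hn : 1 ≤ n) (η a b : ℝ) (hη : 0 < η) :
    (η ≤ a + b → a ≤ b →
      (⨅ θ : ℝ, cover n (hardThresh η) a b θ) =
        stdNormCDF (Real.sqrt n * (a - η)) - stdNormCDF (-(Real.sqrt n * b))) ∧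
    (η ≤ a + b → b < a →
      (⨅ θ : ℝ, cover n (hardThresh η) a b θ) =
        stdNormCDF (Real.sqrt n * (b - η)) - stdNormCDF (-(Real.sqrt n * a))) ∧
    (a + b < η →
      (⨅ θ : ℝ, cover n (hardThresh η) a b θ) = 0) := by
  have hn₀ : n ≠ 0 := by omega
  have hs : 0 < √(n : ℝ) := Real.sqrt_pos.2 (by positivity)
  refine ⟨fun hab hle => ?_, fun hab hlt => ?_, iInf_cover_hardThresh_of_lt⟩
  · rw [iInf_cover_hardThresh_eq_iInf_cover_one hn₀, mul_sub,
      iInf_cover_one_hardThresh (by positivity) (by rw [← mul_add]; gcongr) (by gcongr)]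
  · rw [iInf_cover_swap_of_odd (hardThresh_neg η), iInf_cover_hardThresh_eq_iInf_cover_one hn₀,
      mul_sub, iInf_cover_one_hardThresh (by positivity) (by rw [← mul_add]; gcongr; linarith)
        (by gcongr)]

/-- Proposition 2 (hard-thresholding): the infimal coverage probability of
`C_{H,n} = [θ̂_H - a, θ̂_H + b]`. -/
theorem stmt_2 (n : ℕ) (hn : 1 ≤ n) (η a b : ℝ) (hη : 0 < η) (ha : 0 ≤ a) (hb : 0 ≤ b) :
    (η ≤ a + b → a ≤ b →
      (⨅ θ : ℝ, cover n (hardThresh η) a b θ) =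
        stdNormCDF (Real.sqrt n * (a - η)) - stdNormCDF (-(Real.sqrt n * b))) ∧
    (η ≤ a + b → b < a →
      (⨅ θ : ℝ, cover n (hardThresh η) a b θ) =
        stdNormCDF (Real.sqrt n * (b - η)) - stdNormCDF (-(Real.sqrt n * a))) ∧
    (a + b < η →
      (⨅ θ : ℝ, cover n (hardThresh η) a b θ) = 0) :=
  stmt_2_general n hn η a b hη
end
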